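/- If I ∼ I' then Scan T k I ∼ Scan' U(T) k I', where Scan advances the dot over a terminal using a selected parameterized token (t, α, β, c) ∈ T with α matching the current parameter, appending β and requiring the next partial function to be defined on the extended parameter sequence; Scan' is the standard Earley scan on the induced local lexing with token set U(T). -/

import Mathlib

/-- Hull membership: `ρ` has length `2*u` and for each `i < u`, the partial function
`f i` (modeling `f_{i+1} : Φ^(2i+1) ⇀ Φ`) is defined at the first `2i+1` entries of `ρ`
with value `ρ_{2i+1}`. -/
def InHull {Φ : Type} (f : ℕ → List Φ → Option Φ) (u : ℕ) (ρ : List Φ) : Prop :=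
  ρ.length = 2 * u ∧ ∀ i < u, ρ[2 * i + 1]? = f i (ρ.take (2 * i + 1))

/-- A parameterized rule `N_{f_{k+1}} → X₁^{f₁} … X_k^{f_k}`; symbols are nonterminals
(`Sum.inl`) or terminals (`Sum.inr`), and `f i` models the partial function `f_{i+1}`. -/
structure ParamRule (NT TM Φ : Type) where
  lhs : NT
  rhs : List (NT ⊕ TM)
  f : ℕ → List Φ → Option Φ

/-- A rule of the induced (ordinary) grammar: `lhs^inP_outP → rhs [⊥]`, where the
trailing failure symbol `⊥` is recorded by the flag `fail`, and `isTop` marks the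
special rules `⊤ → S^{φstart}_β` of the induced grammar. -/
structure IndRule (NT TM Φ : Type) where
  isTop : Bool
  lhs : NT
  inP : Φ
  outP : Φ
  rhs : List ((NT ⊕ TM) × Φ × Φ)
  fail : Bool

/-- `q` is one of the rules induced by the parameterized rule `r`. -/
def InducedBy {NT TM Φ : Type} (r : ParamRule NT TM Φ) (q : IndRule NT TM Φ) : Prop :=
  q.isTop = false ∧ q.lhs = r.lhs ∧
  ((q.fail = false ∧ q.rhs.length = r.rhs.length ∧
      ∃ ρ : List Φ, InHull r.f (r.rhs.length + 1) ρ ∧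
        ρ[0]? = some q.inP ∧ ρ[2 * r.rhs.length + 1]? = some q.outP ∧
        ∀ i < r.rhs.length, ∃ X a b,
          r.rhs[i]? = some X ∧ ρ[2 * i + 1]? = some a ∧
          ρ[2 * i + 2]? = some b ∧ q.rhs[i]? = some (X, a, b)) ∨
   (q.fail = true ∧ ∃ h, 1 ≤ h ∧ h ≤ r.rhs.length ∧ q.rhs.length = h ∧
      ∃ ρ : List Φ, InHull r.f h ρ ∧ ρ[0]? = some q.inP ∧
        (∀ i, i + 1 < h → ∃ X a b,
          r.rhs[i]? = some X ∧ ρ[2 * i + 1]? = some a ∧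
          ρ[2 * i + 2]? = some b ∧ q.rhs[i]? = some (X, a, b)) ∧
        ∃ X a βh, r.rhs[h - 1]? = some X ∧ ρ[2 * h - 1]? = some a ∧
          q.rhs[h - 1]? = some (X, a, βh) ∧ r.f h (ρ ++ [βh]) = none))

/-- A parameterized (PELLA) item `(r, d, i, j, ρ)`. -/
structure PItem (NT TM Φ : Type) where
  r : ParamRule NT TM Φ
  d : ℕ
  i : ℕ
  j : ℕ
  ρ : List Φ

/-- An ordinary (ELLA) Earley item `(q, d, i, j)` of the induced grammar. -/
structure EItem (NT TM Φ : Type) where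
  rule : IndRule NT TM Φ
  d : ℕ
  i : ℕ
  j : ℕ

/-- The invariant demanded of parameterized items: `d ≤ k` and `ρ ∈ ⟨f₁,…,f_{d+1}⟩`. -/
def PItem.Valid {NT TM Φ : Type} (x : PItem NT TM Φ) : Prop :=
  x.d ≤ x.r.rhs.length ∧ InHull x.r.f (x.d + 1) x.ρ

/-- `ρ` is the length-`2*(d+1)` prefix of the parameter sequence of the induced rule `q`. -/
def ParamsMatch {NT TM Φ : Type} (q : IndRule NT TM Φ) (d : ℕ) (ρ : List Φ) : Prop :=
  ρ.length = 2 * (d + 1) ∧ ρ[0]? = some q.inP ∧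
  (∀ i < d, ∃ X a b, q.rhs[i]? = some (X, a, b) ∧
      ρ[2 * i + 1]? = some a ∧ ρ[2 * i + 2]? = some b) ∧
  ((∃ X a b, q.rhs[d]? = some (X, a, b) ∧ ρ[2 * d + 1]? = some a) ∨
   (d = q.rhs.length ∧ q.fail = false ∧ ρ[2 * d + 1]? = some q.outP))

/-- The ordinary item `y` belongs to the induced item set `⟦x⟧` of the parameterized
item `x`. -/
def MemInduced {NT TM Φ : Type} (x : PItem NT TM Φ) (y : EItem NT TM Φ) : Prop :=
  InducedBy x.r y.rule ∧ y.d = x.d ∧ y.i = x.i ∧ y.j = x.j ∧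
  (y.rule.fail = true → x.d + 1 ≤ y.rule.rhs.length) ∧
  ParamsMatch y.rule x.d x.ρ

/-- `⟦I⟧`, the induced item set of a set of parameterized items. -/
def InducedSet {NT TM Φ : Type} (I : Set (PItem NT TM Φ)) : Set (EItem NT TM Φ) :=
  { y | ∃ x ∈ I, MemInduced x y }

/-- `NormItems` removes items whose left-hand side is `⊤` or whose dot is immediately
before `⊥`. -/
def NormItems {NT TM Φ : Type} (I' : Set (EItem NT TM Φ)) : Set (EItem NT TM Φ) :=
  { y ∈ I' | y.rule.isTop = false ∧ ¬(y.rule.fail = true ∧ y.d = y.rule.rhs.length) }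

/-- The correspondence `I ∼ I'`, namely `⟦I⟧ = Norm(I')`. -/
def Sim {NT TM Φ : Type} (I : Set (PItem NT TM Φ)) (I' : Set (EItem NT TM Φ)) : Prop :=
  InducedSet I = NormItems I'

/-- The re-association bijection `U(t, α, β, c) = ((t, α, β), c)`. -/
def reassoc {TM Φ Ch : Type} (p : TM × Φ × Φ × List Ch) : (TM × Φ × Φ) × List Ch :=
  ((p.1, p.2.1, p.2.2.1), p.2.2.2)

/-- PELLA scanning at position `k` with selected parameterized token set `T`. -/
def Scan {NT TM Φ Ch : Type} (T : Set (TM × Φ × Φ × List Ch)) (k : ℕ)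
    (I : Set (PItem NT TM Φ)) : Set (PItem NT TM Φ) :=
  I ∪ { z | ∃ x ∈ I, x.j = k ∧ ∃ t : TM, x.r.rhs[x.d]? = some (Sum.inr t) ∧
      ∃ (α β : Φ) (c : List Ch), (t, α, β, c) ∈ T ∧
        x.ρ[2 * x.d + 1]? = some α ∧
        ∃ b : Φ, x.r.f (x.d + 1) (x.ρ ++ [β]) = some b ∧
          z = ⟨x.r, x.d + 1, x.i, k + c.length, (x.ρ ++ [β]) ++ [b]⟩ }

/-- Standard Earley scanning at position `k` on the induced local lexing with
token set `T'`. -/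
def Scan' {NT TM Φ Ch : Type} (T' : Set ((TM × Φ × Φ) × List Ch)) (k : ℕ)
    (I' : Set (EItem NT TM Φ)) : Set (EItem NT TM Φ) :=
  I' ∪ { z | ∃ y ∈ I', y.j = k ∧ ∃ (t : TM) (α β : Φ) (c : List Ch),
      y.rule.rhs[y.d]? = some (Sum.inr t, α, β) ∧ ((t, α, β), c) ∈ T' ∧
      z = ⟨y.rule, y.d + 1, y.i, k + c.length⟩ }

/-! The parameter list `ρ` of a valid item is a hull sequence, and a hull sequence is determined
by its even entries because each odd entry is computed from its prefix. Hence `ParamsMatch`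
pins `ρ` down as the prefix of the full parameter sequence of any induced rule, and the next
parameter `f_{d+2}(ρ β)` chosen by PELLA scanning is exactly the next entry of that sequence.
So scanning `t` with `(t, α, β, c)` on the parameterized side and scanning `t^α_β` with
`((t, α, β), c)` on the induced side move the dot in lock-step, in both directions. -/

namespace InHull

variable {Φ : Type} {f : ℕ → List Φ → Option Φ} {u : ℕ} {ρ σ : List Φ}

theorem take (h : InHull f u ρ) {v : ℕ} (hv : v ≤ u) : InHull f v (ρ.take (2 * v)) := by
  refine ⟨by rw [List.length_take, h.1]; omega, fun i hi => ?_⟩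
  rw [List.getElem?_take_of_lt (by omega), List.take_take, min_eq_left (by omega)]
  exact h.2 i (by omega)

theorem ext (hρ : InHull f u ρ) (hσ : InHull f u σ)
    (heven : ∀ i < u, ρ[2 * i]? = σ[2 * i]?) : ρ = σ := by
  have htake : ∀ m ≤ 2 * u, ρ.take m = σ.take m := by
    intro m
    induction m with
    | zero => simp
    | succ n ih =>
      intro hn
      have hprefix := ih (by omega)
      have hentry : ρ[n]? = σ[n]? := by
        obtain ⟨i, rfl | rfl⟩ := Nat.even_or_odd' n
        · exact heven i (by omega)
        · rw [hρ.2 i (by omega), hσ.2 i (by omega), hprefix]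
      rw [List.take_add_one, List.take_add_one, hprefix, hentry]
  simpa [List.take_of_length_le, hρ.1, hσ.1] using htake (2 * u) le_rfl

end InHull

section Induced

variable {NT TM Φ : Type}

theorem paramsMatch_take {q : IndRule NT TM Φ} {m : ℕ} {ρ : List Φ}
    (hlen : 2 * (m + 1) ≤ ρ.length) (h0 : ρ[0]? = some q.inP)
    (hpre : ∀ i < m, ∃ X a b, q.rhs[i]? = some (X, a, b) ∧
      ρ[2 * i + 1]? = some a ∧ ρ[2 * i + 2]? = some b)
    (hlast : (∃ X a b, q.rhs[m]? = some (X, a, b) ∧ ρ[2 * m + 1]? = some a) ∨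
      (m = q.rhs.length ∧ q.fail = false ∧ ρ[2 * m + 1]? = some q.outP)) :
    ParamsMatch q m (ρ.take (2 * (m + 1))) := by
  refine ⟨by rw [List.length_take]; omega, by rwa [List.getElem?_take_of_lt (by omega)],
    fun i hi => ?_, ?_⟩
  · obtain ⟨X, a, b, hq, ha, hb⟩ := hpre i hi
    exact ⟨X, a, b, hq, by rwa [List.getElem?_take_of_lt (by omega)],
      by rwa [List.getElem?_take_of_lt (by omega)]⟩
  · rw [List.getElem?_take_of_lt (by omega)]
    exact hlast

namespace ParamsMatch

variable {q : IndRule NT TM Φ} {d : ℕ} {ρ σ : List Φ}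

theorem take_pred (h : ParamsMatch q (d + 1) σ) : ParamsMatch q d (σ.take (2 * (d + 1))) := by
  obtain ⟨hlen, h0, hpre, -⟩ := h
  refine ⟨by rw [List.length_take, hlen]; omega, by rwa [List.getElem?_take_of_lt (by omega)],
    fun i hi => ?_, Or.inl ?_⟩
  · obtain ⟨X, a, b, hq, ha, hb⟩ := hpre i (by omega)
    exact ⟨X, a, b, hq, by rwa [List.getElem?_take_of_lt (by omega)],
      by rwa [List.getElem?_take_of_lt (by omega)]⟩
  · obtain ⟨X, a, b, hq, ha, -⟩ := hpre d (by omega)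
    exact ⟨X, a, b, hq, by rwa [List.getElem?_take_of_lt (by omega)]⟩

theorem unique {f : ℕ → List Φ → Option Φ} (hρ : InHull f (d + 1) ρ) (hσ : InHull f (d + 1) σ)
    (h₁ : ParamsMatch q d ρ) (h₂ : ParamsMatch q d σ) : ρ = σ := by
  refine hρ.ext hσ fun i hi => ?_
  cases i with
  | zero => rw [h₁.2.1, h₂.2.1]
  | succ j =>
    obtain ⟨X, a, b, hq, -, hb⟩ := h₁.2.2.1 j (by omega)
    obtain ⟨X', a', b', hq', -, hb'⟩ := h₂.2.2.1 j (by omega)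
    simp only [hq, Option.some.injEq, Prod.mk.injEq] at hq'
    obtain rfl : b = b' := hq'.2.2
    rw [Nat.mul_succ, hb, hb']

end ParamsMatch

namespace InducedBy

variable {r : ParamRule NT TM Φ} {q : IndRule NT TM Φ}

theorem rhs_fst (h : InducedBy r q) {i : ℕ} {X : NT ⊕ TM} {a b : Φ}
    (hq : q.rhs[i]? = some (X, a, b)) : r.rhs[i]? = some X := by
  have hi := (List.getElem?_eq_some_iff.mp hq).1
  have fst_eq {Y : NT ⊕ TM} {a' b' : Φ} (hq' : q.rhs[i]? = some (Y, a', b')) : Y = X :=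
    (Prod.mk.inj (Option.some.inj (hq'.symm.trans hq))).1
  rcases h.2.2 with ⟨-, hlen, ρ, -, -, -, hall⟩ |
    ⟨-, n, -, -, hlen, ρ, -, -, hall, Xn, an, bn, hrn, -, hqn, -⟩
  · obtain ⟨Y, a', b', hr, -, -, hq'⟩ := hall i (by omega)
    rwa [fst_eq hq'] at hr
  · rcases Nat.lt_or_ge (i + 1) n with hin | hin
    · obtain ⟨Y, a', b', hr, -, -, hq'⟩ := hall i hin
      rwa [fst_eq hq'] at hr
    · have hi' : n - 1 = i := by omega
      rw [hi'] at hrn hqn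
      rwa [fst_eq hqn] at hrn

theorem exists_paramsMatch (h : InducedBy r q) {m : ℕ} (hm : m ≤ q.rhs.length)
    (hfail : q.fail = true → m < q.rhs.length) :
    ∃ σ, InHull r.f (m + 1) σ ∧ ParamsMatch q m σ := by
  rcases h.2.2 with ⟨hf, hlen, ρ, hρ, h0, hout, hall⟩ |
    ⟨hf, n, -, -, hlen, ρ, hρ, h0, hall, Xn, an, bn, -, hρn, hqn, -⟩
  · have hentry (i : ℕ) (hi : i < q.rhs.length) : ∃ X a b, q.rhs[i]? = some (X, a, b) ∧
        ρ[2 * i + 1]? = some a ∧ ρ[2 * i + 2]? = some b := by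
      obtain ⟨X, a, b, -, ha, hb, hq⟩ := hall i (by omega)
      exact ⟨X, a, b, hq, ha, hb⟩
    refine ⟨_, hρ.take (by omega), paramsMatch_take (by rw [hρ.1]; omega) h0
      (fun i hi => hentry i (by omega)) ?_⟩
    rcases Nat.lt_or_ge m q.rhs.length with hlt | hge
    · obtain ⟨X, a, b, hq, ha, -⟩ := hentry m hlt
      exact Or.inl ⟨X, a, b, hq, ha⟩
    · exact Or.inr ⟨by omega, hf, by rwa [show m = r.rhs.length by omega]⟩
  · have hmn : m < n := hlen ▸ hfail hf
    have hentry (i : ℕ) (hi : i + 1 < n) : ∃ X a b, q.rhs[i]? = some (X, a, b) ∧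
        ρ[2 * i + 1]? = some a ∧ ρ[2 * i + 2]? = some b := by
      obtain ⟨X, a, b, -, ha, hb, hq⟩ := hall i hi
      exact ⟨X, a, b, hq, ha, hb⟩
    refine ⟨_, hρ.take hmn, paramsMatch_take (by rw [hρ.1]; omega) h0
      (fun i hi => hentry i (by omega)) (Or.inl ?_)⟩
    rcases Nat.lt_or_ge (m + 1) n with hlt | hge
    · obtain ⟨X, a, b, hq, ha, -⟩ := hentry m hlt
      exact ⟨X, a, b, hq, ha⟩
    · have hm' : n - 1 = m := by omega
      rw [hm'] at hqn
      exact ⟨Xn, an, bn, hqn, by rwa [show 2 * m + 1 = 2 * n - 1 by omega]⟩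

end InducedBy

namespace MemInduced

variable {x : PItem NT TM Φ} {y : EItem NT TM Φ}

theorem mem_normItems (h : MemInduced x y) {I' : Set (EItem NT TM Φ)} (hy : y ∈ I') :
    y ∈ NormItems I' := by
  refine ⟨hy, h.1.1, fun ⟨hf, hd⟩ => ?_⟩
  have := h.2.2.2.2.1 hf
  have := h.2.1
  omega

theorem of_scan {t : TM} {α β b : Φ} {j : ℕ} (hrt : x.r.rhs[x.d]? = some (.inr t))
    (hα : x.ρ[2 * x.d + 1]? = some α)
    (h : MemInduced ⟨x.r, x.d + 1, x.i, j, x.ρ ++ [β] ++ [b]⟩ y) :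
    MemInduced x ⟨y.rule, x.d, x.i, x.j⟩ ∧ y.rule.rhs[x.d]? = some (.inr t, α, β) := by
  obtain ⟨hind, -, -, -, -, hpm⟩ := h
  dsimp only at hpm
  have hlen : x.ρ.length = 2 * (x.d + 1) := by
    have := hpm.1
    simp only [List.length_append, List.length_singleton] at this
    omega
  obtain ⟨X, a, b', hq, ha, hb⟩ := hpm.2.2.1 x.d (by omega)
  rw [List.getElem?_append_left (by simp; omega), List.getElem?_append_left (by omega), hα,
    Option.some.injEq] at ha
  rw [List.getElem?_append_left (by simp; omega), show 2 * x.d + 2 = x.ρ.length by omega,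
    List.getElem?_concat_length, Option.some.injEq] at hb
  subst ha hb
  obtain rfl : X = .inr t := Option.some.inj ((hind.rhs_fst hq).symm.trans hrt)
  have hpm' := hpm.take_pred
  rw [List.append_assoc, List.take_left' hlen] at hpm'
  have hdlt := (List.getElem?_eq_some_iff.mp hq).1
  exact ⟨⟨hind, rfl, rfl, rfl, fun _ => hdlt, hpm'⟩, hq⟩

theorem exists_scan {t : TM} {α β : Φ} (hx : InHull x.r.f (x.d + 1) x.ρ) (h : MemInduced x y)
    (hrhs : y.rule.rhs[y.d]? = some (.inr t, α, β))
    (hfail : y.rule.fail = true → y.d + 2 ≤ y.rule.rhs.length) :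
    x.r.rhs[x.d]? = some (.inr t) ∧ x.ρ[2 * x.d + 1]? = some α ∧
      ∃ b, x.r.f (x.d + 1) (x.ρ ++ [β]) = some b ∧
        ∀ j, MemInduced ⟨x.r, x.d + 1, x.i, j, x.ρ ++ [β] ++ [b]⟩ ⟨y.rule, y.d + 1, y.i, j⟩ := by
  obtain ⟨q, d, i, j⟩ := y
  obtain ⟨hind, rfl, rfl, -, -, hpm⟩ := h
  dsimp only at *
  have hlt := (List.getElem?_eq_some_iff.mp hrhs).1
  have hlen := hx.1
  have hα : x.ρ[2 * x.d + 1]? = some α := by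
    rcases hpm.2.2.2 with ⟨X, a, b, hq, ha⟩ | ⟨hdl, -, -⟩
    · simp only [hrhs, Option.some.injEq, Prod.mk.injEq] at hq
      rwa [← hq.2.1] at ha
    · omega
  obtain ⟨σ, hσ, hpmσ⟩ := hind.exists_paramsMatch (m := x.d + 1) (by omega)
    (fun hf => by have := hfail hf; omega)
  have hρσ : x.ρ = σ.take (2 * (x.d + 1)) :=
    ParamsMatch.unique hx (hσ.take (by omega)) hpm hpmσ.take_pred
  have hβ : σ[2 * (x.d + 1)]? = some β := by
    obtain ⟨X, a, b, hq, -, hb⟩ := hpmσ.2.2.1 x.d (by omega)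
    simp only [hrhs, Option.some.injEq, Prod.mk.injEq] at hq
    rwa [hq.2.2]
  obtain ⟨b, hb⟩ : ∃ b, σ[2 * (x.d + 1) + 1]? = some b :=
    ⟨σ[2 * (x.d + 1) + 1]'(by rw [hσ.1]; omega), List.getElem?_eq_getElem _⟩
  have hσeq : σ = x.ρ ++ [β] ++ [b] := by
    conv_lhs => rw [← List.take_of_length_le (show σ.length ≤ 2 * (x.d + 1) + 1 + 1 by
      rw [hσ.1]; omega)]
    rw [List.take_add_one, List.take_add_one, ← hρσ, hβ, hb]
    rfl
  subst hσeq
  refine ⟨hind.rhs_fst hrhs, hα, b, ?_, fun j => ⟨hind, rfl, rfl, rfl, hfail, hpmσ⟩⟩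
  have hf := hσ.2 (x.d + 1) (by omega)
  rwa [hb, List.take_left' (by simp [hlen]), eq_comm] at hf

end MemInduced

end Induced

section Scan

variable {NT TM Φ Ch : Type} (T : Set (TM × Φ × Φ × List Ch)) (k : ℕ)
  {I : Set (PItem NT TM Φ)} {I' : Set (EItem NT TM Φ)}

theorem inducedSet_scan_subset (hsim : Sim I I') :
    InducedSet (Scan T k I) ⊆ NormItems (Scan' (reassoc '' T) k I') := by
  rintro y ⟨z, hz | ⟨x, hx, hxk, t, hrt, α, β, c, hT, hα, b, -, rfl⟩, hzy⟩
  · have hy : y ∈ NormItems I' := hsim ▸ ⟨z, hz, hzy⟩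
    exact ⟨Or.inl hy.1, hy.2⟩
  · obtain ⟨hxy, hrhs⟩ := hzy.of_scan hrt hα
    have hy' : (⟨y.rule, x.d, x.i, x.j⟩ : EItem NT TM Φ) ∈ NormItems I' := hsim ▸ ⟨x, hx, hxy⟩
    refine hzy.mem_normItems (Or.inr ⟨_, hy'.1, hxk, t, α, β, c, hrhs, ⟨_, hT, rfl⟩, ?_⟩)
    obtain ⟨q, d, i, j⟩ := y
    obtain ⟨-, rfl, rfl, rfl, -⟩ := hzy
    rfl

theorem normItems_scan'_subset (hI : ∀ x ∈ I, x.Valid) (hsim : Sim I I') :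
    NormItems (Scan' (reassoc '' T) k I') ⊆ InducedSet (Scan T k I) := by
  rintro y ⟨hy | ⟨y', hy', hjk, t', α', β', c', hrhs, ⟨⟨t, α, β, c⟩, hT, he⟩, rfl⟩, htop, hnf⟩
  · obtain ⟨x, hx, hxy⟩ : y ∈ InducedSet I := hsim ▸ ⟨hy, htop, hnf⟩
    exact ⟨x, Or.inl hx, hxy⟩
  · simp only [reassoc, Prod.mk.injEq] at he
    obtain ⟨⟨rfl, rfl, rfl⟩, rfl⟩ := he
    have hlt := (List.getElem?_eq_some_iff.mp hrhs).1
    obtain ⟨x, hx, hxy⟩ : y' ∈ InducedSet I := hsim ▸ ⟨hy', htop, fun ⟨_, hd⟩ => by omega⟩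
    obtain ⟨hrt, hα, b, hb, hz⟩ := hxy.exists_scan (hI x hx).2 hrhs
      (fun hf => by have : y'.d + 1 ≠ y'.rule.rhs.length := fun hd => hnf ⟨hf, hd⟩; omega)
    exact ⟨_, Or.inr ⟨x, hx, hxy.2.2.2.1 ▸ hjk, t, hrt, α, β, c, hT, hα, b, hb, rfl⟩, hz _⟩

end Scan

/-- If `I ∼ I'` then `Scan T k I ∼ Scan' U(T) k I'`. -/
theorem scan_simulation {NT TM Φ Ch : Type}
    (T : Set (TM × Φ × Φ × List Ch)) (k : ℕ)
    (I : Set (PItem NT TM Φ)) (I' : Set (EItem NT TM Φ))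
    (hI : ∀ x ∈ I, x.Valid) (hsim : Sim I I') :
    Sim (Scan T k I) (Scan' (reassoc '' T) k I') :=
  (inducedSet_scan_subset T k hsim).antisymm (normItems_scan'_subset T k hI hsim)
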